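/- With the notation of the conformal Lagrangian set-up for the structure H: let x : ℝ → ℝ^{4n} be a C² curve, and suppose that for every t ∈ ℝ and every w ∈ ℝ^{4n}, Φ_L^H(x(t))(ẋ(t), w) = D₁E_L^H(x(t), ẋ(t))·w, where D₁ denotes the Fréchet derivative of E_L^H in its first (position) argument with the velocity argument held fixed. Then the conformal Euler–Lagrange equations (3.6) hold along x: for every i ∈ {1,…,n} and every t ∈ ℝ, ab·(d/dt)(e^{−λ(x(t))}·(∂L/∂x_i)(x(t))) + (∂L/∂x_{3n+i})(x(t)) = 0, ab·(d/dt)(e^{−λ(x(t))}·(∂L/∂x_{n+i})(x(t))) + (∂L/∂x_{2n+i})(x(t)) = 0, ab·(d/dt)(e^{λ(x(t))}·(∂L/∂x_{2n+i})(x(t))) + (∂L/∂x_{n+i})(x(t)) = 0, and ab·(d/dt)(e^{λ(x(t))}·(∂L/∂x_{3n+i})(x(t))) + (∂L/∂x_i)(x(t)) = 0. -/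

import Mathlib

open Real

noncomputable section

/-- The partial derivative `∂f/∂x_k` of `f : ℝ^{4n} → ℝ` at `x`, in the
coordinate direction `k`. -/
def pd {n : ℕ} (f : ((Fin 4 × Fin n) → ℝ) → ℝ) (k : Fin 4 × Fin n)
    (x : (Fin 4 × Fin n) → ℝ) : ℝ :=
  fderiv ℝ f x (Pi.single k 1)

/-- The conformal 1-form `d_H L` of the structure `H`, viewed as a map
assigning to each point `x` the linear functional `w ↦ (d_H L)(x)(w)`. -/
def omegaH {n : ℕ} (a b : ℝ) (L lam : ((Fin 4 × Fin n) → ℝ) → ℝ)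
    (x w : (Fin 4 × Fin n) → ℝ) : ℝ :=
  ∑ i : Fin n,
    (-(a * b * exp (lam x) * pd L (3, i) x * w (0, i))
     - a * b * exp (lam x) * pd L (2, i) x * w (1, i)
     - a * b * exp (-lam x) * pd L (1, i) x * w (2, i)
     - a * b * exp (-lam x) * pd L (0, i) x * w (3, i))

/-- The closed 2-form `Φ_L^H = -d(d_H L)`:
`Φ_L^H(x)(u, v) = (Dω_H(x)·v)(u) - (Dω_H(x)·u)(v)`. -/
def PhiH {n : ℕ} (a b : ℝ) (L lam : ((Fin 4 × Fin n) → ℝ) → ℝ)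
    (x u v : (Fin 4 × Fin n) → ℝ) : ℝ :=
  fderiv ℝ (fun y => omegaH a b L lam y u) x v
    - fderiv ℝ (fun y => omegaH a b L lam y v) x u

/-- The conformal energy function `E_L^H` at a point `x` with velocity `X`. -/
def EH {n : ℕ} (a b : ℝ) (L lam : ((Fin 4 × Fin n) → ℝ) → ℝ)
    (x X : (Fin 4 × Fin n) → ℝ) : ℝ :=
  (∑ i : Fin n,
    (-(a * b * X (0, i) * exp (lam x) * pd L (3, i) x)
     - a * b * X (1, i) * exp (lam x) * pd L (2, i) x
     - a * b * X (2, i) * exp (-lam x) * pd L (1, i) x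
     - a * b * X (3, i) * exp (-lam x) * pd L (0, i) x)) - L x

/-!
Since `E_L^H(y, X) = ω_H(y)(X) - L(y)`, the term `D(ω_H(·)(ẋ))·w` occurs on both sides of the
dynamical equation and cancels, leaving `D(ω_H(·)(w))(x)·ẋ = dL(x)·w`; by the chain rule this says
`d/dt ω_H(x(t))(w) = dL(x(t))·w`. For a coordinate vector `w = e_k`, `ω_H(x)(e_k)` is `-ab e^{±λ(x)}`
times a partial derivative of `L`, and the four block cases are the equations (3.6).
-/

section
variable {n : ℕ} (a b : ℝ) (L lam : ((Fin 4 × Fin n) → ℝ) → ℝ)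

lemma omegaH_apply_single (c : Fin 4) (j : Fin n) (y : (Fin 4 × Fin n) → ℝ) :
    omegaH a b L lam y (Pi.single (c, j) 1) = -(a * b) *
      ![exp (lam y) * pd L (3, j) y, exp (lam y) * pd L (2, j) y,
        exp (-lam y) * pd L (1, j) y, exp (-lam y) * pd L (0, j) y] c := by
  rw [omegaH, Finset.sum_eq_single j (fun i _ hij => by simp [hij]) (by simp)]
  fin_cases c <;> simp <;> ring

lemma EH_eq_omegaH_sub (y X : (Fin 4 × Fin n) → ℝ) :
    EH a b L lam y X = omegaH a b L lam y X - L y := by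
  simp only [EH, omegaH]
  congr 1
  exact Finset.sum_congr rfl fun i _ => by ring

lemma differentiable_pd {f : ((Fin 4 × Fin n) → ℝ) → ℝ} (hf : ContDiff ℝ 2 f)
    (k : Fin 4 × Fin n) : Differentiable ℝ (pd f k) :=
  ((hf.fderiv_right le_rfl).clm_apply contDiff_const).differentiable one_ne_zero

lemma differentiable_omegaH (hL : ContDiff ℝ 2 L) (hlam : Differentiable ℝ lam)
    (w : (Fin 4 × Fin n) → ℝ) : Differentiable ℝ (fun y => omegaH a b L lam y w) := by
  have := differentiable_pd hL
  unfold omegaH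
  fun_prop

lemma deriv_omegaH_comp_eq_fderiv {x : ℝ → (Fin 4 × Fin n) → ℝ} {t : ℝ}
    {w : (Fin 4 × Fin n) → ℝ} (hx : DifferentiableAt ℝ x t)
    (hω : ∀ v, DifferentiableAt ℝ (fun y => omegaH a b L lam y v) (x t))
    (hL : DifferentiableAt ℝ L (x t))
    (h : PhiH a b L lam (x t) (deriv x t) w
      = fderiv ℝ (fun y => EH a b L lam y (deriv x t)) (x t) w) :
    deriv (fun s => omegaH a b L lam (x s) w) t = fderiv ℝ L (x t) w := by
  refine (fderiv_comp_deriv t (hω w) hx).trans ?_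
  simp only [PhiH, EH_eq_omegaH_sub] at h
  rw [fderiv_fun_sub (hω _) hL, sub_apply] at h
  linarith

end

/-- Along an integral curve of the dynamical equation `i_X Φ_L^H = dE_L^H`
(equation (1.1)), the conformal Euler–Lagrange equations (3.6) hold. -/
theorem stmt10 (n : ℕ) (a b : ℝ) (L lam : ((Fin 4 × Fin n) → ℝ) → ℝ)
    (hL : ContDiff ℝ 2 L) (hlam : ContDiff ℝ 2 lam)
    (x : ℝ → (Fin 4 × Fin n) → ℝ) (hx : ContDiff ℝ 2 x)
    (hdyn : ∀ (t : ℝ) (w : (Fin 4 × Fin n) → ℝ),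
      PhiH a b L lam (x t) (deriv x t) w
        = fderiv ℝ (fun y => EH a b L lam y (deriv x t)) (x t) w) :
    ∀ (i : Fin n) (t : ℝ),
      a * b * deriv (fun s => exp (-lam (x s)) * pd L (0, i) (x s)) t
          + pd L (3, i) (x t) = 0 ∧
      a * b * deriv (fun s => exp (-lam (x s)) * pd L (1, i) (x s)) t
          + pd L (2, i) (x t) = 0 ∧
      a * b * deriv (fun s => exp (lam (x s)) * pd L (2, i) (x s)) t
          + pd L (1, i) (x t) = 0 ∧
      a * b * deriv (fun s => exp (lam (x s)) * pd L (3, i) (x s)) t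
          + pd L (0, i) (x t) = 0 := by
  intro i t
  have hω := differentiable_omegaH a b L lam hL (hlam.differentiable two_ne_zero)
  have key (k : Fin 4 × Fin n) :
      deriv (fun s => omegaH a b L lam (x s) (Pi.single k 1)) t = pd L k (x t) :=
    deriv_omegaH_comp_eq_fderiv a b L lam (hx.differentiable two_ne_zero t) (hω · _)
      (hL.differentiable two_ne_zero _) (hdyn t _)
  simp only [Prod.forall, omegaH_apply_single, deriv_const_mul_field'] at key
  refine ⟨?_, ?_, ?_, ?_⟩
  · have h := key 3 i; simp only [Matrix.cons_val] at h; linarith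
  · have h := key 2 i; simp only [Matrix.cons_val] at h; linarith
  · have h := key 1 i; simp only [Matrix.cons_val] at h; linarith
  · have h := key 0 i; simp only [Matrix.cons_val] at h; linarith

end
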